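/- Under conditions (2), (3), (4) and (5) on g, T₂,ₙ := ((n−1)/n)[E{g(X₁Y₁/(X̄Ȳ)) g(X₁Y₂/(X̄Ȳ))} − 2E{g(X₁Y₁/(X̄Ȳ)) g(X₁Y₂)} + E{g(X₁Y₁) g(X₁Y₂)}] → 0 as n → ∞. -/

import Mathlib

/-!
Continuity and the ratio bound (5) at `t₀ = 1` give polynomial growth `|g y| ≤ C max(1, y)^m`
on `[0, ∞)`: at `x = 2` the ratio bound reads `|g(2t)| ≤ ψ(2) |g t|` wherever `g t ≠ 0`, and `g`
cannot vanish at some but not all points of `(1, ∞)`, because a zero that is a limit of non-zeros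
makes `g` vanish on all of `[0, ∞)`.

Write `S = X̄Ȳ`. By the strong law `S → 1` a.s., so on `{S ≥ 1/4}` the integrands converge a.s.
by continuity of `g` and are dominated by `C² 16^m max(1, X₁Y₁)^m max(1, X₁Y₂)^m`, which is
integrable because products of independent exponentials have all moments. On `{S < 1/4}` every
argument of `g` is at most `n²` (as `Xᵢ ≤ n X̄` and `Yⱼ ≤ n Ȳ`), so the integrands are
`O(n^{4m})`, while a Chernoff bound gives `P(S < 1/4) ≤ 2 (e^{1/2}/2)^n`. Hence all three
expectations tend to `E{g(X₁Y₁) g(X₁Y₂)}`.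
-/

open MeasureTheory ProbabilityTheory Filter Real Topology

/-- The sample mean of the first `n` variables of the sequence `X`. -/
noncomputable def sampleMean {Ω : Type*} (X : ℕ → Ω → ℝ) (n : ℕ) (ω : Ω) : ℝ :=
  (∑ i ∈ Finset.range n, X i ω) / n

lemma max_one_div_le {u s δ : ℝ} (hu : 0 ≤ u) (hδ : 0 < δ) (hδ1 : δ ≤ 1) (hs : δ ≤ s) :
    max 1 (u / s) ≤ δ⁻¹ * max 1 u := by
  refine max_le ?_ ?_
  · exact one_le_mul_of_one_le_of_one_le (one_le_inv₀ hδ |>.2 hδ1) (le_max_left _ _)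
  · calc u / s ≤ u / δ := div_le_div_of_nonneg_left hu hδ hs
      _ = δ⁻¹ * u := by ring
      _ ≤ δ⁻¹ * max 1 u := mul_le_mul_of_nonneg_left (le_max_right _ _) (by positivity)

lemma mul_exp_one_sub_lt_one {a : ℝ} (ha : a ≠ 1) : a * exp (1 - a) < 1 := by
  have h := add_one_lt_exp (sub_ne_zero.2 ha)
  calc a * exp (1 - a) < exp (a - 1) * exp (1 - a) :=
        mul_lt_mul_of_pos_right (by linarith) (exp_pos _)
    _ = 1 := by rw [← exp_add]; simp

lemma max_one_mul_le_mul_max_one {z w : ℝ} (hw : 0 ≤ w) : max 1 (z * w) ≤ max 1 z * max 1 w :=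
  max_le (one_le_mul_of_one_le_of_one_le (le_max_left _ _) (le_max_left _ _))
    (mul_le_mul (le_max_right _ _) (le_max_right _ _) hw (zero_le_one.trans (le_max_left _ _)))

lemma tendsto_natCast_sub_one_div_natCast :
    Tendsto (fun n : ℕ => ((n : ℝ) - 1) / n) atTop (𝓝 1) := by
  have h := tendsto_const_nhds (x := (1 : ℝ)).sub tendsto_one_div_atTop_nhds_zero_nat
  rw [sub_zero] at h
  refine h.congr' ((eventually_ne_atTop 0).mono fun n hn => ?_)
  field_simp

section Growth

variable {g : ℝ → ℝ}

lemma abs_le_mul_max_one_pow_of_abs_two_mul_le {M : ℝ} {m : ℕ}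
    (hM : ∀ y ∈ Set.Icc (0 : ℝ) 2, |g y| ≤ M)
    (hdouble : ∀ t, 1 < t → |g (2 * t)| ≤ 2 ^ m * |g t|) {y : ℝ} (hy : 0 ≤ y) :
    |g y| ≤ M * max 1 y ^ m := by
  have hsmall : ∀ y ∈ Set.Icc (0 : ℝ) 2, |g y| ≤ M * max 1 y ^ m := fun y hy =>
    (hM y hy).trans (le_mul_of_one_le_right ((abs_nonneg _).trans (hM y hy))
      (one_le_pow₀ (le_max_left _ _)))
  obtain ⟨k, hk⟩ := pow_unbounded_of_one_lt y one_lt_two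
  induction k generalizing y with
  | zero => exact hsmall y ⟨hy, by linarith [pow_zero (2 : ℝ)]⟩
  | succ k ih =>
    rcases le_or_gt y 2 with hy2 | hy2
    · exact hsmall y ⟨hy, hy2⟩
    have hhalf : |g (y / 2)| ≤ M * max 1 (y / 2) ^ m :=
      ih (by positivity) (by rw [pow_succ] at hk; linarith)
    rw [max_eq_right (by linarith)] at hhalf ⊢
    calc |g y| = |g (2 * (y / 2))| := by ring_nf
      _ ≤ 2 ^ m * (M * (y / 2) ^ m) := by
        refine (hdouble _ (by linarith)).trans (mul_le_mul_of_nonneg_left hhalf (by positivity))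
      _ = M * y ^ m := by rw [div_pow]; field_simp

lemma abs_comp_mul_le_of_mem_closure {ψ : ℝ → ℝ} (hg : ContinuousOn g (Set.Ici 0))
    (hψ : ∀ t, 1 < t → ∀ x, 0 ≤ x → |g (t * x) / g t| < ψ x) {x : ℝ} (hx : 0 ≤ x) {z : ℝ}
    (hz : z ∈ closure {t | 1 < t ∧ g t ≠ 0}) : |g (z * x)| ≤ ψ x * |g z| := by
  have hcl : closure {t | 1 < t ∧ g t ≠ 0} ⊆ Set.Ici 0 :=
    closure_minimal (fun t ht => le_of_lt (zero_lt_one.trans ht.1)) isClosed_Ici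
  refine le_on_closure (f := fun z => |g (z * x)|) (g := fun z => ψ x * |g z|)
    (fun t htN => ?_) ?_ ?_ hz
  · obtain ⟨ht, hgt⟩ := htN
    have := hψ t ht x hx
    rw [abs_div, div_lt_iff₀ (abs_pos.2 hgt)] at this
    exact this.le
  · exact ((hg.comp (continuousOn_id.mul continuousOn_const)
      fun t (ht : 0 ≤ t) => mul_nonneg ht hx).abs).mono hcl
  · exact (hg.abs.const_smul (ψ x)).mono hcl

lemma forall_ne_zero_or_forall_eq_zero_of_abs_div_lt {ψ : ℝ → ℝ}
    (hg : ContinuousOn g (Set.Ici 0)) (hψ : ∀ t, 1 < t → ∀ x, 0 ≤ x → |g (t * x) / g t| < ψ x) :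
    (∀ t, 1 < t → g t ≠ 0) ∨ ∀ t, 1 < t → g t = 0 := by
  by_contra! h
  obtain ⟨⟨b, hb, hgb⟩, c, hc, hgc⟩ := h
  have hN : IsOpen {t | 1 < t ∧ g t ≠ 0} :=
    (hg.mono (Set.Ioi_subset_Ici zero_le_one)).isOpen_inter_preimage isOpen_Ioi
      isOpen_compl_singleton
  refine (isPreconnected_Ioi.subset_of_closure_inter_subset hN ⟨c, hc, hc, hgc⟩
    (fun z ⟨hzN, hz⟩ => ⟨hz, fun hgz => hgc ?_⟩) hb).2 hgb
  -- the ratio bound extends to the limit point `z`, so `g z = 0` forces `g (z * (c / z)) = 0`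
  have hz0 : z ≠ 0 := (zero_lt_one.trans hz).ne'
  have := abs_comp_mul_le_of_mem_closure hg hψ (div_nonneg (zero_le_one.trans hc.le)
    (zero_le_one.trans (le_of_lt hz))) hzN
  rwa [hgz, abs_zero, mul_zero, mul_div_cancel₀ _ hz0, abs_nonpos_iff] at this

lemma exists_abs_le_mul_max_one_pow {ψ : ℝ → ℝ} (hg : ContinuousOn g (Set.Ici 0))
    (hψ : ∀ t, 1 < t → ∀ x, 0 ≤ x → |g (t * x) / g t| < ψ x) :
    ∃ C : ℝ, ∃ m : ℕ, ∀ y, 0 ≤ y → |g y| ≤ C * max 1 y ^ m := by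
  obtain ⟨M, hM⟩ := isCompact_Icc.exists_bound_of_continuousOn (hg.mono Set.Icc_subset_Ici_self)
  have hdouble : ∃ m : ℕ, ∀ t, 1 < t → |g (2 * t)| ≤ 2 ^ m * |g t| := by
    rcases forall_ne_zero_or_forall_eq_zero_of_abs_div_lt hg hψ with hne | hzero
    · obtain ⟨m, hm⟩ := pow_unbounded_of_one_lt (ψ 2) one_lt_two
      refine ⟨m, fun t ht => ?_⟩
      have := hψ t ht 2 zero_le_two
      rw [abs_div, div_lt_iff₀ (abs_pos.2 (hne t ht)), mul_comm t] at this
      nlinarith [abs_nonneg (g t)]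
    · exact ⟨0, fun t ht => by simp [hzero _ (by linarith : 1 < 2 * t)]⟩
  obtain ⟨m, hm⟩ := hdouble
  exact ⟨M, m, fun y hy => abs_le_mul_max_one_pow_of_abs_two_mul_le hM hm hy⟩

lemma abs_le_mul_pow_of_max_one_le {C : ℝ} {m : ℕ}
    (hC : ∀ y, 0 ≤ y → |g y| ≤ C * max 1 y ^ m) {y N : ℝ} (hy : 0 ≤ y) (hN : max 1 y ≤ N) :
    |g y| ≤ C * N ^ m := by
  have hC0 : 0 ≤ C := by simpa using (abs_nonneg _).trans (hC 0 le_rfl)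
  exact (hC y hy).trans (mul_le_mul_of_nonneg_left
    (pow_le_pow_left₀ (zero_le_one.trans (le_max_left _ _)) hN m) hC0)

end Growth

namespace ProbabilityTheory

variable {r : ℝ}

lemma toReal_exponentialPDF (hr : 0 < r) (x : ℝ) :
    (exponentialPDF r x).toReal = (Set.Ici 0).indicator (fun x => r * exp (-(r * x))) x := by
  rw [exponentialPDF, ENNReal.toReal_ofReal (exponentialPDFReal_nonneg hr x)]
  by_cases hx : 0 ≤ x <;> simp [exponentialPDFReal, gammaPDFReal, hx]

lemma expMeasure_eq_withDensity : expMeasure r = volume.withDensity (exponentialPDF r) := rfl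

lemma measurable_exponentialPDF : Measurable (exponentialPDF r) :=
  (measurable_exponentialPDFReal r).ennreal_ofReal

lemma integral_expMeasure (hr : 0 < r) (f : ℝ → ℝ) :
    ∫ x, f x ∂expMeasure r = ∫ x in Set.Ioi 0, r * exp (-(r * x)) * f x := by
  rw [expMeasure_eq_withDensity, integral_withDensity_eq_integral_toReal_smul
    measurable_exponentialPDF (ae_of_all _ fun _ => ENNReal.ofReal_lt_top)]
  simp_rw [toReal_exponentialPDF hr, smul_eq_mul, ← Set.indicator_mul_left]
  rw [integral_indicator measurableSet_Ici, integral_Ici_eq_integral_Ioi]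

lemma integrable_expMeasure_iff (hr : 0 < r) {f : ℝ → ℝ} :
    Integrable f (expMeasure r) ↔
      IntegrableOn (fun x => r * exp (-(r * x)) * f x) (Set.Ioi 0) := by
  rw [expMeasure_eq_withDensity, integrable_withDensity_iff_integrable_smul'
    measurable_exponentialPDF (ae_of_all _ fun _ => ENNReal.ofReal_lt_top)]
  simp_rw [toReal_exponentialPDF hr, smul_eq_mul, ← Set.indicator_mul_left]
  rw [integrable_indicator_iff measurableSet_Ici, integrableOn_Ici_iff_integrableOn_Ioi]

lemma integrable_pow_expMeasure (hr : 0 < r) (k : ℕ) :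
    Integrable (fun x => x ^ k) (expMeasure r) := by
  rw [integrable_expMeasure_iff hr]
  refine IntegrableOn.congr_fun ((integrableOn_rpow_mul_exp_neg_mul_rpow (p := 1) (s := k)
    (by linarith [k.cast_nonneg (α := ℝ)]) one_pos hr).const_mul r) (fun x _ => ?_)
    measurableSet_Ioi
  simp only [rpow_one, rpow_natCast, neg_mul]
  ring

lemma integrable_exp_mul_expMeasure (hr : 0 < r) {t : ℝ} (ht : t < r) :
    Integrable (fun x => exp (t * x)) (expMeasure r) := by
  rw [integrable_expMeasure_iff hr]
  refine IntegrableOn.congr_fun ((exp_neg_integrableOn_Ioi 0 (sub_pos.2 ht)).const_mul r)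
    (fun x _ => ?_) measurableSet_Ioi
  rw [mul_assoc, ← exp_add]
  ring_nf

lemma integral_id_expMeasure (hr : 0 < r) : ∫ x, x ∂expMeasure r = r⁻¹ := by
  rw [integral_expMeasure hr]
  have h := integral_rpow_mul_exp_neg_mul_Ioi (a := 2) two_pos hr
  norm_num at h
  rw [show r⁻¹ = r * (r ^ 2)⁻¹ by field_simp, ← h, ← integral_const_mul]
  refine setIntegral_congr_fun measurableSet_Ioi fun x _ => ?_
  ring

lemma integral_exp_mul_expMeasure (hr : 0 < r) {t : ℝ} (ht : t < r) :
    ∫ x, exp (t * x) ∂expMeasure r = r / (r - t) := by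
  rw [integral_expMeasure hr]
  have h := integral_rpow_mul_exp_neg_mul_Ioi (a := 1) one_pos (sub_pos.2 ht)
  simp only [sub_self, rpow_zero, one_mul, rpow_one, Gamma_one, mul_one] at h
  rw [div_eq_mul_one_div r, ← h, ← integral_const_mul]
  refine setIntegral_congr_fun measurableSet_Ioi fun x _ => ?_
  rw [mul_assoc, ← exp_add]
  ring_nf

lemma expMeasure_Iic_zero (hr : 0 < r) : expMeasure r (Set.Iic 0) = 0 := by
  have := isProbabilityMeasure_expMeasure hr
  have h := cdf_expMeasure_eq hr 0
  rw [cdf_eq_real] at h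
  simpa [measureReal_eq_zero_iff] using h

lemma integrable_max_one_pow_expMeasure {r : ℝ} (hr : 0 < r) (k : ℕ) :
    Integrable (fun x => max 1 x ^ k) (expMeasure r) := by
  have := isProbabilityMeasure_expMeasure hr
  refine ((integrable_const 1).add (integrable_pow_expMeasure hr k).norm).mono'
    (by fun_prop) (ae_of_all _ fun x => ?_)
  rw [Real.norm_of_nonneg (by positivity)]
  rcases le_total x 1 with hx | hx
  · simp [max_eq_left hx]
  · simp [max_eq_right hx, abs_of_nonneg (zero_le_one.trans hx)]

variable {Ω : Type*} [MeasurableSpace Ω] {μ : Measure Ω}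

lemma ae_pos_of_map_eq_expMeasure {Z : Ω → ℝ} (hZm : Measurable Z) (hr : 0 < r)
    (hZ : μ.map Z = expMeasure r) : ∀ᵐ ω ∂μ, 0 < Z ω := by
  rw [ae_iff]
  simp_rw [not_lt]
  rw [show {ω | Z ω ≤ 0} = Z ⁻¹' Set.Iic 0 from rfl, ← Measure.map_apply hZm measurableSet_Iic,
    hZ, expMeasure_Iic_zero hr]

lemma mgf_of_map_eq_expMeasure {Z : Ω → ℝ} (hZm : Measurable Z) (hr : 0 < r)
    (hZ : μ.map Z = expMeasure r) {t : ℝ} (ht : t < r) : mgf Z μ t = r / (r - t) := by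
  rw [← mgf_id_map hZm.aemeasurable, hZ, mgf]
  exact integral_exp_mul_expMeasure hr ht

lemma measureReal_sum_le_le_pow [IsProbabilityMeasure μ] {Z : ℕ → Ω → ℝ}
    (hZm : ∀ i, Measurable (Z i)) (hr : 0 < r) (hZ : ∀ i, μ.map (Z i) = expMeasure r)
    (hind : iIndepFun Z μ) {a : ℝ} (ha0 : 0 < a) (ha1 : a ≤ 1) (n : ℕ) :
    μ.real {ω | ∑ i ∈ Finset.range n, Z i ω ≤ n * a / r} ≤ (a * exp (1 - a)) ^ n := by
  -- the optimal Chernoff parameter: there the mgf of each `Z i` equals `a`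
  set t := r * (1 - a⁻¹)
  have ht : t ≤ 0 :=
    mul_nonpos_of_nonneg_of_nonpos hr.le (by linarith [one_le_inv_iff₀.2 ⟨ha0, ha1⟩])
  have htr : t < r := by linarith
  have hint : Integrable (fun ω => exp (t * (∑ i ∈ Finset.range n, Z i) ω)) μ :=
    hind.integrable_exp_mul_sum hZm fun i _ =>
      ((hZ i).symm ▸ integrable_exp_mul_expMeasure hr htr).comp_measurable (hZm i)
  have hmgf : mgf (∑ i ∈ Finset.range n, Z i) μ t = a ^ n := by
    rw [hind.mgf_sum hZm, Finset.prod_congr rfl fun i _ =>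
      mgf_of_map_eq_expMeasure (hZm i) hr (hZ i) htr, Finset.prod_const, Finset.card_range]
    congr 1
    simp only [t]
    field_simp
    ring
  calc μ.real {ω | ∑ i ∈ Finset.range n, Z i ω ≤ n * a / r}
      ≤ exp (-t * (n * a / r)) * mgf (∑ i ∈ Finset.range n, Z i) μ t := by
        simpa only [Finset.sum_apply] using measure_le_le_exp_mul_mgf (n * a / r) ht hint
    _ = (a * exp (1 - a)) ^ n := by
        rw [hmgf, mul_pow, ← exp_nat_mul, mul_comm]
        congr 2
        simp only [t]
        field_simp
        ring

lemma IndepFun.integrable_max_one_mul_pow {Z W : Ω → ℝ} (hZW : IndepFun Z W μ)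
    (hZm : Measurable Z) (hWm : Measurable W) (hW0 : ∀ᵐ ω ∂μ, 0 ≤ W ω) {k : ℕ}
    (hZ : Integrable (fun ω => max 1 (Z ω) ^ k) μ)
    (hW : Integrable (fun ω => max 1 (W ω) ^ k) μ) :
    Integrable (fun ω => max 1 (Z ω * W ω) ^ k) μ := by
  refine ((hZW.comp (φ := fun x => max 1 x ^ k) (ψ := fun x => max 1 x ^ k) (by fun_prop)
    (by fun_prop)).integrable_mul hZ hW).mono' (by fun_prop) ?_
  filter_upwards [hW0] with ω hω
  rw [Real.norm_of_nonneg (by positivity), Pi.mul_apply, Function.comp_apply,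
    Function.comp_apply, ← mul_pow]
  exact pow_le_pow_left₀ (by positivity) (max_one_mul_le_mul_max_one hω) k

lemma iIndepFun.of_sumElim_left {X Y : ℕ → Ω → ℝ} (h : iIndepFun (Sum.elim X Y) μ) :
    iIndepFun X μ :=
  h.precomp (g := Sum.inl) Sum.inl_injective

lemma iIndepFun.of_sumElim_right {X Y : ℕ → Ω → ℝ} (h : iIndepFun (Sum.elim X Y) μ) :
    iIndepFun Y μ :=
  h.precomp (g := Sum.inr) Sum.inr_injective

end ProbabilityTheory

structure DominatedOff {Ω : Type*} [MeasurableSpace Ω] (μ : Measure Ω) (E : ℕ → Set Ω)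
    (c : ℕ → ℝ) (bound : Ω → ℝ) (F : ℕ → Ω → ℝ) (f : Ω → ℝ) : Prop where
  aestronglyMeasurable : ∀ n, AEStronglyMeasurable (F n) μ
  norm_le_of_notMem : ∀ n, ∀ᵐ ω ∂μ, ω ∉ E n → ‖F n ω‖ ≤ bound ω
  norm_le_of_mem : ∀ᶠ n in atTop, ∀ᵐ ω ∂μ, ω ∈ E n → ‖F n ω‖ ≤ c n
  tendsto : ∀ᵐ ω ∂μ, Tendsto (F · ω) atTop (𝓝 (f ω))

namespace DominatedOff

variable {Ω : Type*} [MeasurableSpace Ω] {μ : Measure Ω} {E : ℕ → Set Ω} {c d : ℕ → ℝ}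
  {Φ Ψ : Ω → ℝ} {F G : ℕ → Ω → ℝ} {f g : Ω → ℝ}

lemma mul (hF : DominatedOff μ E c Φ F f) (hG : DominatedOff μ E d Ψ G g) :
    DominatedOff μ E (fun n => c n * d n) (fun ω => Φ ω * Ψ ω) (fun n ω => F n ω * G n ω)
      (fun ω => f ω * g ω) where
  aestronglyMeasurable n := (hF.aestronglyMeasurable n).mul (hG.aestronglyMeasurable n)
  norm_le_of_notMem n := by
    filter_upwards [hF.norm_le_of_notMem n, hG.norm_le_of_notMem n] with ω hFω hGω hω
    rw [norm_mul]
    exact mul_le_mul (hFω hω) (hGω hω) (norm_nonneg _) ((norm_nonneg _).trans (hFω hω))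
  norm_le_of_mem := by
    filter_upwards [hF.norm_le_of_mem, hG.norm_le_of_mem] with n hFn hGn
    filter_upwards [hFn, hGn] with ω hFω hGω hω
    rw [norm_mul]
    exact mul_le_mul (hFω hω) (hGω hω) (norm_nonneg _) ((norm_nonneg _).trans (hFω hω))
  tendsto := by
    filter_upwards [hF.tendsto, hG.tendsto] with ω hFω hGω
    exact hFω.mul hGω

lemma integrable_of_norm_le_of_mem (hF : DominatedOff μ E c Φ F f) [IsFiniteMeasure μ]
    (hΦ : Integrable Φ μ) {n : ℕ} (hn : ∀ᵐ ω ∂μ, ω ∈ E n → ‖F n ω‖ ≤ c n) :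
    Integrable (F n) μ := by
  refine (hΦ.norm.add (integrable_const |c n|)).mono' (hF.aestronglyMeasurable n) ?_
  filter_upwards [hF.norm_le_of_notMem n, hn] with ω hgood hbad
  by_cases hω : ω ∈ E n
  · exact (hbad hω).trans (le_add_of_nonneg_of_le (norm_nonneg _) (le_abs_self _))
  · exact (hgood hω).trans (le_add_of_le_of_nonneg (Real.le_norm_self _) (abs_nonneg _))

lemma tendsto_integral [IsFiniteMeasure μ] (hF : DominatedOff μ E c Φ F f)
    (hE : ∀ n, MeasurableSet (E n)) (hΦ : Integrable Φ μ)
    (hcE : Tendsto (fun n => c n * μ.real (E n)) atTop (𝓝 0))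
    (hev : ∀ᵐ ω ∂μ, ∀ᶠ n in atTop, ω ∉ E n) :
    Tendsto (fun n => ∫ ω, F n ω ∂μ) atTop (𝓝 (∫ ω, f ω ∂μ)) := by
  have hgood : Tendsto (fun n => ∫ ω in (E n)ᶜ, F n ω ∂μ) atTop (𝓝 (∫ ω, f ω ∂μ)) := by
    simp_rw [← integral_indicator (hE _).compl]
    refine tendsto_integral_of_dominated_convergence (‖Φ ·‖)
        (fun n => (hF.aestronglyMeasurable n).indicator (hE n).compl) hΦ.norm (fun n => ?_) ?_
    · filter_upwards [hF.norm_le_of_notMem n] with ω hω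
      by_cases hωE : ω ∈ E n
      · simp [hωE]
      · rw [Set.indicator_of_mem (Set.mem_compl hωE)]
        exact (hω hωE).trans (Real.le_norm_self _)
    · filter_upwards [hF.tendsto, hev] with ω hω hωE
      refine hω.congr' (hωE.mono fun n hn => ?_)
      exact (Set.indicator_of_mem (Set.mem_compl hn) _).symm
  have hbad : Tendsto (fun n => ∫ ω in E n, F n ω ∂μ) atTop (𝓝 0) := by
    refine squeeze_zero_norm' ?_ hcE
    filter_upwards [hF.norm_le_of_mem] with n hn
    exact norm_setIntegral_le_of_norm_le_const_ae' (measure_lt_top _ _) hn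
  rw [← add_zero (∫ ω, f ω ∂μ)]
  refine (hgood.add hbad).congr' ?_
  filter_upwards [hF.norm_le_of_mem] with n hn
  rw [add_comm, integral_add_compl (hE n) (hF.integrable_of_norm_le_of_mem hΦ hn)]

end DominatedOff

section SampleMean

variable {Ω : Type*} {X Y : ℕ → Ω → ℝ}

lemma natCast_mul_sampleMean (X : ℕ → Ω → ℝ) (n : ℕ) (ω : Ω) :
    n * sampleMean X n ω = ∑ i ∈ Finset.range n, X i ω := by
  rcases eq_or_ne n 0 with rfl | hn
  · simp
  · rw [sampleMean, mul_div_cancel₀ _ (Nat.cast_ne_zero.2 hn)]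

lemma le_natCast_mul_sampleMean {ω : Ω} (hX : ∀ i, 0 ≤ X i ω) {i n : ℕ} (hi : i < n) :
    X i ω ≤ n * sampleMean X n ω := by
  rw [natCast_mul_sampleMean]
  exact Finset.single_le_sum (fun j _ => hX j) (Finset.mem_range.2 hi)

lemma mul_le_sq_mul_sampleMean_mul_sampleMean {ω : Ω} (hX : ∀ i, 0 ≤ X i ω)
    (hY : ∀ j, 0 ≤ Y j ω) {i j n : ℕ} (hi : i < n) (hj : j < n) :
    X i ω * Y j ω ≤ n ^ 2 * (sampleMean X n ω * sampleMean Y n ω) := by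
  calc X i ω * Y j ω ≤ (n * sampleMean X n ω) * (n * sampleMean Y n ω) :=
        mul_le_mul (le_natCast_mul_sampleMean hX hi) (le_natCast_mul_sampleMean hY hj) (hY j)
          ((hX i).trans (le_natCast_mul_sampleMean hX hi))
    _ = n ^ 2 * (sampleMean X n ω * sampleMean Y n ω) := by ring

variable [MeasurableSpace Ω] {μ : Measure Ω} {r : ℝ}

lemma measurable_sampleMean (hX : ∀ i, Measurable (X i)) (n : ℕ) :
    Measurable (sampleMean X n) :=
  (Finset.measurable_sum _ fun i _ => hX i).div_const _

lemma measurableSet_sampleMean_mul_sampleMean_lt (hX : ∀ i, Measurable (X i))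
    (hY : ∀ j, Measurable (Y j)) (n : ℕ) (a : ℝ) :
    MeasurableSet {ω | sampleMean X n ω * sampleMean Y n ω < a} :=
  measurableSet_lt ((measurable_sampleMean hX n).mul (measurable_sampleMean hY n))
    measurable_const

lemma tendsto_sampleMean_of_map_eq_expMeasure [IsProbabilityMeasure μ]
    (hXm : ∀ i, Measurable (X i)) (hr : 0 < r) (hX : ∀ i, μ.map (X i) = expMeasure r)
    (hind : iIndepFun X μ) :
    ∀ᵐ ω ∂μ, Tendsto (fun n => sampleMean X n ω) atTop (𝓝 r⁻¹) := by
  have hint : Integrable (X 0) μ := by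
    have h := ((hX 0).symm ▸ integrable_pow_expMeasure hr 1).comp_measurable (hXm 0)
    simpa [Function.comp_def] using h
  have hmean : μ[X 0] = r⁻¹ := by
    rw [← integral_id_expMeasure hr, ← hX 0,
      integral_map (hXm 0).aemeasurable (f := fun x => x) aestronglyMeasurable_id]
  simpa only [sampleMean, hmean] using strong_law_ae_real X hint
    (fun i j hij => hind.indepFun hij)
    (fun i => ⟨(hXm i).aemeasurable, (hXm 0).aemeasurable, by rw [hX i, hX 0]⟩)

lemma measureReal_sampleMean_lt_le_pow [IsProbabilityMeasure μ]
    (hXm : ∀ i, Measurable (X i)) (hr : 0 < r) (hX : ∀ i, μ.map (X i) = expMeasure r)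
    (hind : iIndepFun X μ) {a : ℝ} (ha0 : 0 < a) (ha1 : a ≤ 1) (n : ℕ) :
    μ.real {ω | sampleMean X n ω < a / r} ≤ (a * exp (1 - a)) ^ n := by
  refine (measureReal_mono fun ω (hω : sampleMean X n ω < a / r) => ?_).trans
    (measureReal_sum_le_le_pow hXm hr hX hind ha0 ha1 n)
  change ∑ i ∈ Finset.range n, X i ω ≤ n * a / r
  rw [← natCast_mul_sampleMean, mul_div_assoc]
  exact mul_le_mul_of_nonneg_left hω.le n.cast_nonneg

end SampleMean

section TwoExponentialSamples

variable {Ω : Type*} [MeasurableSpace Ω] {μ : Measure Ω} {X Y : ℕ → Ω → ℝ}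
  {g : ℝ → ℝ} {C : ℝ} {m : ℕ}

lemma dominatedOff_comp_mul_div_sampleMean_mul_sampleMean (hXm : ∀ i, Measurable (X i))
    (hYm : ∀ j, Measurable (Y j)) (hgm : Measurable g) (hg : ContinuousOn g (Set.Ici 0))
    (hC : ∀ y, 0 ≤ y → |g y| ≤ C * max 1 y ^ m)
    (hpos : ∀ᵐ ω ∂μ, (∀ i, 0 < X i ω) ∧ ∀ j, 0 < Y j ω)
    (hS : ∀ᵐ ω ∂μ, Tendsto (fun n => sampleMean X n ω * sampleMean Y n ω) atTop (𝓝 1))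
    (i j : ℕ) :
    DominatedOff μ (fun n => {ω | sampleMean X n ω * sampleMean Y n ω < 4⁻¹})
      (fun n => C * ((n : ℝ) ^ 2) ^ m) (fun ω => C * (4 * max 1 (X i ω * Y j ω)) ^ m)
      (fun n ω => g (X i ω * Y j ω / (sampleMean X n ω * sampleMean Y n ω)))
      (fun ω => g (X i ω * Y j ω)) where
  aestronglyMeasurable n := (hgm.comp (((hXm i).mul (hYm j)).div
    ((measurable_sampleMean hXm n).mul (measurable_sampleMean hYm n)))).aestronglyMeasurable
  norm_le_of_notMem n := by
    filter_upwards [hpos] with ω ⟨hX, hY⟩ hω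
    have hu : 0 ≤ X i ω * Y j ω := (mul_pos (hX i) (hY j)).le
    have hδ : (4 : ℝ)⁻¹ ≤ sampleMean X n ω * sampleMean Y n ω := not_lt.1 hω
    rw [Real.norm_eq_abs]
    refine abs_le_mul_pow_of_max_one_le hC (div_nonneg hu (by linarith)) ?_
    simpa using max_one_div_le hu (by norm_num) (by norm_num) hδ
  norm_le_of_mem := by
    filter_upwards [eventually_gt_atTop (max i j)] with n hn
    filter_upwards [hpos] with ω ⟨hX, hY⟩ _
    have hle := mul_le_sq_mul_sampleMean_mul_sampleMean (fun i => (hX i).le)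
      (fun j => (hY j).le) ((le_max_left i j).trans_lt hn) ((le_max_right i j).trans_lt hn)
    have hu : 0 < X i ω * Y j ω := mul_pos (hX i) (hY j)
    have hSpos : 0 < sampleMean X n ω * sampleMean Y n ω :=
      pos_of_mul_pos_right (hu.trans_le hle) (sq_nonneg _)
    have hn1 : (1 : ℝ) ≤ (n : ℝ) ^ 2 :=
      one_le_pow₀ (by exact_mod_cast (Nat.zero_le _).trans_lt hn)
    rw [Real.norm_eq_abs]
    exact abs_le_mul_pow_of_max_one_le hC (div_nonneg hu.le hSpos.le)
      (max_le hn1 ((div_le_iff₀ hSpos).2 hle))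
  tendsto := by
    filter_upwards [hpos, hS] with ω ⟨hX, hY⟩ hω
    have hu : 0 ≤ X i ω * Y j ω := (mul_pos (hX i) (hY j)).le
    refine (hg _ hu).tendsto.comp (tendsto_nhdsWithin_iff.2 ⟨?_, ?_⟩)
    · simpa [div_eq_mul_inv] using (hω.inv₀ one_ne_zero).const_mul (X i ω * Y j ω)
    · filter_upwards [hω.eventually (lt_mem_nhds one_pos)] with n hn using div_nonneg hu hn.le

lemma dominatedOff_comp_mul (hXm : ∀ i, Measurable (X i)) (hYm : ∀ j, Measurable (Y j))
    (hgm : Measurable g) (hC : ∀ y, 0 ≤ y → |g y| ≤ C * max 1 y ^ m)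
    (hpos : ∀ᵐ ω ∂μ, (∀ i, 0 < X i ω) ∧ ∀ j, 0 < Y j ω) (i j : ℕ) :
    DominatedOff μ (fun n => {ω | sampleMean X n ω * sampleMean Y n ω < 4⁻¹})
      (fun n => C * ((n : ℝ) ^ 2) ^ m) (fun ω => C * (4 * max 1 (X i ω * Y j ω)) ^ m)
      (fun _ ω => g (X i ω * Y j ω)) (fun ω => g (X i ω * Y j ω)) where
  aestronglyMeasurable _ := (hgm.comp ((hXm i).mul (hYm j))).aestronglyMeasurable
  norm_le_of_notMem n := by
    filter_upwards [hpos] with ω ⟨hX, hY⟩ _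
    rw [Real.norm_eq_abs]
    exact abs_le_mul_pow_of_max_one_le hC (mul_pos (hX i) (hY j)).le
      (le_mul_of_one_le_left (zero_le_one.trans (le_max_left _ _)) (by norm_num))
  norm_le_of_mem := by
    filter_upwards [eventually_gt_atTop (max i j)] with n hn
    filter_upwards [hpos] with ω ⟨hX, hY⟩ hω
    have hle := mul_le_sq_mul_sampleMean_mul_sampleMean (fun i => (hX i).le)
      (fun j => (hY j).le) ((le_max_left i j).trans_lt hn) ((le_max_right i j).trans_lt hn)
    have hω' : sampleMean X n ω * sampleMean Y n ω < 4⁻¹ := hω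
    have hn1 : (1 : ℝ) ≤ (n : ℝ) ^ 2 :=
      one_le_pow₀ (by exact_mod_cast (Nat.zero_le _).trans_lt hn)
    rw [Real.norm_eq_abs]
    exact abs_le_mul_pow_of_max_one_le hC (mul_pos (hX i) (hY j)).le
      (max_le hn1 (by nlinarith))
  tendsto := ae_of_all _ fun _ => tendsto_const_nhds

lemma integrable_max_one_mul_pow (hXm : ∀ i, Measurable (X i))
    (hYm : ∀ j, Measurable (Y j)) (hindep : iIndepFun (Sum.elim X Y) μ)
    (hX : ∀ i, μ.map (X i) = expMeasure 1) (hY : ∀ j, μ.map (Y j) = expMeasure 1)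
    (i j k : ℕ) : Integrable (fun ω => max 1 (X i ω * Y j ω) ^ k) μ :=
  IndepFun.integrable_max_one_mul_pow (hindep.indepFun Sum.inl_ne_inr) (hXm i) (hYm j)
    ((ae_pos_of_map_eq_expMeasure (hYm j) one_pos (hY j)).mono fun _ h => h.le)
    (((hX i).symm ▸ integrable_max_one_pow_expMeasure one_pos k).comp_measurable (hXm i))
    (((hY j).symm ▸ integrable_max_one_pow_expMeasure one_pos k).comp_measurable (hYm j))

lemma memLp_two_mul_mul_max_one_mul_pow (hXm : ∀ i, Measurable (X i))
    (hYm : ∀ j, Measurable (Y j)) (hindep : iIndepFun (Sum.elim X Y) μ)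
    (hX : ∀ i, μ.map (X i) = expMeasure 1) (hY : ∀ j, μ.map (Y j) = expMeasure 1)
    (c a : ℝ) (i j k : ℕ) : MemLp (fun ω => c * (a * max 1 (X i ω * Y j ω)) ^ k) 2 μ := by
  have hm : Measurable (fun ω => c * (a * max 1 (X i ω * Y j ω)) ^ k) := by
    have := hXm i; have := hYm j; fun_prop
  refine (memLp_two_iff_integrable_sq hm.aestronglyMeasurable).2 <|
    ((integrable_max_one_mul_pow hXm hYm hindep hX hY i j (2 * k)).const_mul
      (c ^ 2 * a ^ (2 * k))).congr (ae_of_all _ fun ω => ?_)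
  ring

lemma ae_forall_pos_of_map_eq_expMeasure (hXm : ∀ i, Measurable (X i))
    (hYm : ∀ j, Measurable (Y j)) (hX : ∀ i, μ.map (X i) = expMeasure 1)
    (hY : ∀ j, μ.map (Y j) = expMeasure 1) :
    ∀ᵐ ω ∂μ, (∀ i, 0 < X i ω) ∧ ∀ j, 0 < Y j ω :=
  (ae_all_iff.2 fun i => ae_pos_of_map_eq_expMeasure (hXm i) one_pos (hX i)).and
    (ae_all_iff.2 fun j => ae_pos_of_map_eq_expMeasure (hYm j) one_pos (hY j))

variable [IsProbabilityMeasure μ]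

lemma ae_tendsto_sampleMean_mul_sampleMean (hXm : ∀ i, Measurable (X i))
    (hYm : ∀ j, Measurable (Y j)) (hindep : iIndepFun (Sum.elim X Y) μ)
    (hX : ∀ i, μ.map (X i) = expMeasure 1) (hY : ∀ j, μ.map (Y j) = expMeasure 1) :
    ∀ᵐ ω ∂μ, Tendsto (fun n => sampleMean X n ω * sampleMean Y n ω) atTop (𝓝 1) := by
  filter_upwards [tendsto_sampleMean_of_map_eq_expMeasure hXm one_pos hX
      hindep.of_sumElim_left,
    tendsto_sampleMean_of_map_eq_expMeasure hYm one_pos hY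
      hindep.of_sumElim_right] with ω hXω hYω
  simpa using hXω.mul hYω

lemma measureReal_sampleMean_mul_sampleMean_lt_le (hXm : ∀ i, Measurable (X i))
    (hYm : ∀ j, Measurable (Y j)) (hindep : iIndepFun (Sum.elim X Y) μ)
    (hX : ∀ i, μ.map (X i) = expMeasure 1) (hY : ∀ j, μ.map (Y j) = expMeasure 1) (n : ℕ) :
    μ.real {ω | sampleMean X n ω * sampleMean Y n ω < 4⁻¹} ≤
      2 * (2⁻¹ * exp (1 - 2⁻¹)) ^ n := by
  have hXn := measureReal_sampleMean_lt_le_pow hXm one_pos hX hindep.of_sumElim_left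
    (a := 2⁻¹) (by norm_num) (by norm_num) n
  have hYn := measureReal_sampleMean_lt_le_pow hYm one_pos hY hindep.of_sumElim_right
    (a := 2⁻¹) (by norm_num) (by norm_num) n
  rw [div_one] at hXn hYn
  have hsub : {ω | sampleMean X n ω * sampleMean Y n ω < 4⁻¹} ⊆
      {ω | sampleMean X n ω < 2⁻¹} ∪ {ω | sampleMean Y n ω < 2⁻¹} := by
    intro ω hω
    by_contra! h
    simp only [Set.mem_union, Set.mem_ofPred_eq, not_or, not_lt] at h hω
    nlinarith
  calc _ ≤ _ := measureReal_mono hsub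
    _ ≤ _ := measureReal_union_le _ _
    _ ≤ _ := by linarith

lemma tendsto_pow_mul_measureReal_sampleMean_mul_sampleMean_lt (hXm : ∀ i, Measurable (X i))
    (hYm : ∀ j, Measurable (Y j)) (hindep : iIndepFun (Sum.elim X Y) μ)
    (hX : ∀ i, μ.map (X i) = expMeasure 1) (hY : ∀ j, μ.map (Y j) = expMeasure 1) (k : ℕ) :
    Tendsto (fun n : ℕ =>
      (n : ℝ) ^ k * μ.real {ω | sampleMean X n ω * sampleMean Y n ω < 4⁻¹}) atTop (𝓝 0) := by
  have hρ : |2⁻¹ * exp (1 - 2⁻¹)| < 1 := by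
    rw [abs_of_pos (by positivity)]
    exact mul_exp_one_sub_lt_one (by norm_num)
  refine squeeze_zero (fun n => by positivity) (fun n => ?_)
    (by simpa using (tendsto_pow_const_mul_const_pow_of_abs_lt_one k hρ).const_mul 2)
  calc _ ≤ (n : ℝ) ^ k * (2 * (2⁻¹ * exp (1 - 2⁻¹)) ^ n) := mul_le_mul_of_nonneg_left
        (measureReal_sampleMean_mul_sampleMean_lt_le hXm hYm hindep hX hY n) (by positivity)
    _ = 2 * ((n : ℝ) ^ k * (2⁻¹ * exp (1 - 2⁻¹)) ^ n) := by ring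

end TwoExponentialSamples

theorem lecam2d_T2_general
    {Ω : Type*} [MeasureSpace Ω] [IsProbabilityMeasure (ℙ : Measure Ω)]
    (X Y : ℕ → Ω → ℝ)
    (hmX : ∀ i, Measurable (X i)) (hmY : ∀ j, Measurable (Y j))
    (hindep : iIndepFun (Sum.elim X Y) ℙ)
    (hX : ∀ i, Measure.map (X i) ℙ = expMeasure 1)
    (hY : ∀ j, Measure.map (Y j) ℙ = expMeasure 1)
    (g : ℝ → ℝ) (hgm : Measurable g)
    (h2 : ContinuousOn g (Set.Ici 0))
    (h5 : ∀ t₀ : ℝ, 0 < t₀ → ∃ ψ : ℝ → ℝ, Measurable ψ ∧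
      (∀ n : ℕ, Integrable (fun ω => ψ (sampleMean X n ω * sampleMean Y n ω)) ℙ) ∧
      ∀ t : ℝ, t₀ < t → ∀ x : ℝ, 0 ≤ x → |g (t * x) / g t| < ψ x)
    :
    Tendsto (fun n : ℕ =>
      (((n : ℝ) - 1) / (n : ℝ)) *
      ((∫ ω, (g (X 0 ω * Y 0 ω / (sampleMean X n ω * sampleMean Y n ω))) * (g (X 0 ω * Y 1 ω / (sampleMean X n ω * sampleMean Y n ω))) ∂ℙ) -
        2 * (∫ ω, (g (X 0 ω * Y 0 ω / (sampleMean X n ω * sampleMean Y n ω))) * (g (X 0 ω * Y 1 ω)) ∂ℙ) +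
        (∫ ω, (g (X 0 ω * Y 0 ω)) * (g (X 0 ω * Y 1 ω)) ∂ℙ)))
      atTop (𝓝 0) := by
  obtain ⟨ψ, -, -, hψ⟩ := h5 1 one_pos
  obtain ⟨C, m, hC⟩ := exists_abs_le_mul_max_one_pow h2 hψ
  have hpos := ae_forall_pos_of_map_eq_expMeasure hmX hmY hX hY
  have hS := ae_tendsto_sampleMean_mul_sampleMean hmX hmY hindep hX hY
  have hev : ∀ᵐ ω ∂ℙ, ∀ᶠ n in atTop,
      ω ∉ {ω | sampleMean X n ω * sampleMean Y n ω < 4⁻¹} := by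
    filter_upwards [hS] with ω hω
    filter_upwards [hω.eventually (lt_mem_nhds (by norm_num : (4 : ℝ)⁻¹ < 1))] with n hn
    exact not_lt.2 hn.le
  have hcE : Tendsto (fun n : ℕ => C * ((n : ℝ) ^ 2) ^ m * (C * ((n : ℝ) ^ 2) ^ m) *
      (ℙ : Measure Ω).real {ω | sampleMean X n ω * sampleMean Y n ω < 4⁻¹}) atTop (𝓝 0) := by
    have h := (tendsto_pow_mul_measureReal_sampleMean_mul_sampleMean_lt hmX hmY hindep hX hY
      (4 * m)).const_mul (C ^ 2)
    rw [mul_zero] at h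
    exact h.congr fun n => by ring
  have hbound := (memLp_two_mul_mul_max_one_mul_pow hmX hmY hindep hX hY C 4 0 0 m).integrable_mul
    (memLp_two_mul_mul_max_one_mul_pow hmX hmY hindep hX hY C 4 0 1 m)
  have hE := (measurableSet_sampleMean_mul_sampleMean_lt hmX hmY · 4⁻¹)
  have hscaled := dominatedOff_comp_mul_div_sampleMean_mul_sampleMean hmX hmY hgm h2 hC hpos hS
  have hA := ((hscaled 0 0).mul (hscaled 0 1)).tendsto_integral hE hbound hcE hev
  have hB := ((hscaled 0 0).mul (dominatedOff_comp_mul hmX hmY hgm hC hpos 0 1)).tendsto_integral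
    hE hbound hcE hev
  convert tendsto_natCast_sub_one_div_natCast.mul ((hA.sub (hB.const_mul 2)).add_const
    (∫ ω, g (X 0 ω * Y 0 ω) * g (X 0 ω * Y 1 ω) ∂ℙ)) using 2
  ring

/-- `T₂,ₙ → 0` as `n → ∞`. -/
theorem lecam2d_T2
    {Ω : Type*} [MeasureSpace Ω] [IsProbabilityMeasure (ℙ : Measure Ω)]
    (X Y : ℕ → Ω → ℝ)
    (hmX : ∀ i, Measurable (X i)) (hmY : ∀ j, Measurable (Y j))
    (hindep : iIndepFun (Sum.elim X Y) ℙ)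
    (hX : ∀ i, Measure.map (X i) ℙ = expMeasure 1)
    (hY : ∀ j, Measure.map (Y j) ℙ = expMeasure 1)
    (g : ℝ → ℝ) (hgm : Measurable g)
    (h2 : ContinuousOn g (Set.Ici 0))
    (h3 : Integrable (fun ω => (g (X 0 ω * Y 0 ω)) ^ 2) ℙ)
    (h4 : ∀ t₀ : ℝ, 0 < t₀ → ∃ φ : ℝ → ℝ, Measurable φ ∧
      (∀ n : ℕ, Integrable (fun ω => φ (sampleMean X n ω * sampleMean Y n ω)) ℙ) ∧
      ∀ t : ℝ, 0 < t → t < t₀ → ∀ x : ℝ, 0 ≤ x → |g (t * x)| < φ x)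
    (h5 : ∀ t₀ : ℝ, 0 < t₀ → ∃ ψ : ℝ → ℝ, Measurable ψ ∧
      (∀ n : ℕ, Integrable (fun ω => ψ (sampleMean X n ω * sampleMean Y n ω)) ℙ) ∧
      ∀ t : ℝ, t₀ < t → ∀ x : ℝ, 0 ≤ x → |g (t * x) / g t| < ψ x)
    :
    Tendsto (fun n : ℕ =>
      (((n : ℝ) - 1) / (n : ℝ)) *
      ((∫ ω, (g (X 0 ω * Y 0 ω / (sampleMean X n ω * sampleMean Y n ω))) * (g (X 0 ω * Y 1 ω / (sampleMean X n ω * sampleMean Y n ω))) ∂ℙ) -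
        2 * (∫ ω, (g (X 0 ω * Y 0 ω / (sampleMean X n ω * sampleMean Y n ω))) * (g (X 0 ω * Y 1 ω)) ∂ℙ) +
        (∫ ω, (g (X 0 ω * Y 0 ω)) * (g (X 0 ω * Y 1 ω)) ∂ℙ)))
      atTop (𝓝 0) :=
  lecam2d_T2_general X Y hmX hmY hindep hX hY g hgm h2 h5
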